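/- arXiv:1606.08428 — 2 statements merged into one kernel-verified Lean document; each statement's English description precedes it below -/
import Mathlib

section
/- For every β ∈ k with β ≠ 0 and every α ∈ k, the set of monomials { uⁱ(du)ʲdˡ : i, j, l ∈ ℕ } is a k-linear basis of the down-up algebra D(α,β). -/
open FreeAlgebra

noncomputable section

/-- The defining relations of the down-up algebra `D(a,b)` (with `u = ι k 0`, `d = ι k 1`). -/
inductive DownUpRel (k : Type*) [CommRing k] (a b : k) :
    FreeAlgebra k (Fin 2) → FreeAlgebra k (Fin 2) → Prop
  | rel1 : DownUpRel k a b (ι k 0 * ι k 0 * ι k 1)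
      (a • (ι k 0 * ι k 1 * ι k 0) + b • (ι k 1 * ι k 0 * ι k 0))
  | rel2 : DownUpRel k a b (ι k 0 * ι k 1 * ι k 1)
      (a • (ι k 1 * ι k 0 * ι k 1) + b • (ι k 1 * ι k 1 * ι k 0))

/-- The down-up algebra `D(a,b)`. -/
abbrev DownUp (k : Type*) [CommRing k] (a b : k) : Type _ :=
  RingQuot (DownUpRel k a b)

/-- The generator `u` of the down-up algebra. -/
def DownUp.u (k : Type*) [CommRing k] (a b : k) : DownUp k a b :=
  RingQuot.mkAlgHom k (DownUpRel k a b) (ι k 0)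

/-- The generator `d` of the down-up algebra. -/
def DownUp.d (k : Type*) [CommRing k] (a b : k) : DownUp k a b :=
  RingQuot.mkAlgHom k (DownUpRel k a b) (ι k 1)

/-!
Spanning: write `0` for `u` and `1` for `d`. Since `β ≠ 0`, the relations rewrite the factors
`du²` and `d²u` of a word as combinations of words of smaller binary value, and the words with
neither factor are exactly the `uⁱ(du)ʲdˡ`.

Independence: `D(α,β)` acts on the free `k[X₀, X₁]`-module with basis `e (n, c)`, `n ∈ ℤ`,
`c ∈ ℕ`, by `u e (n, c) = e (n + 1, c)` and `d e (n, c) = μₙ e (n - 1, c + 1)`, where `(μₙ)` is the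
generic solution of `μₙ₋₁ = αμₙ + βμₙ₊₁`. The monomial `uⁱ(du)ʲdˡ` sends `e (0, 0)` to
`μ₁₋ₗʲ μ₀ μ₋₁ ⋯ μ₁₋ₗ e (i - l, j + l)`, and for fixed `i - l` and `j + l` these coefficients are
linearly independent: all but the one with `l = 0` are multiples of `μ₀`, which vanishes at a point
where `μ₁` does not, and dividing them by `μ₀` gives the same situation with all indices shifted.
-/

namespace DownUp

def normalWord (i j l : ℕ) : List (Fin 2) :=
  List.replicate i 0 ++ (List.replicate j [1, 0]).flatten ++ List.replicate l 1

theorem eq_normalWord_or_exists_reducible (w : List (Fin 2)) :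
    (∃ i j l, w = normalWord i j l) ∨
      ∃ A B : List (Fin 2), w = A ++ [1, 0, 0] ++ B ∨ w = A ++ [1, 1, 0] ++ B := by
  induction w with
  | nil => exact Or.inl ⟨0, 0, 0, rfl⟩
  | cons c w ih =>
    rcases ih with ⟨i, j, l, rfl⟩ | ⟨A, B, h | h⟩
    · match c, i, j with
      | 0, i, j => exact Or.inl ⟨i + 1, j, l, rfl⟩
      | 1, i + 2, j =>
        exact Or.inr ⟨[], normalWord i j l, Or.inl (by simp [normalWord, List.replicate_succ])⟩
      | 1, 1, j => exact Or.inl ⟨0, j + 1, l, by simp [normalWord, List.replicate_succ]⟩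
      | 1, 0, j + 1 =>
        exact Or.inr ⟨[], normalWord 0 j l, Or.inr (by simp [normalWord, List.replicate_succ])⟩
      | 1, 0, 0 => exact Or.inl ⟨0, 0, l + 1, by simp [normalWord, List.replicate_succ]⟩
    · exact Or.inr ⟨c :: A, B, Or.inl (by simp [h])⟩
    · exact Or.inr ⟨c :: A, B, Or.inr (by simp [h])⟩

def binaryValue : List (Fin 2) → ℕ
  | [] => 0
  | c :: w => c * 2 ^ w.length + binaryValue w

theorem binaryValue_append (v w : List (Fin 2)) :
    binaryValue (v ++ w) = binaryValue v * 2 ^ w.length + binaryValue w := by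
  induction v with
  | nil => simp [binaryValue]
  | cons c v ih => simp only [List.cons_append, binaryValue, ih, List.length_append, pow_add]; ring

theorem binaryValue_append_append_lt (A B : List (Fin 2)) {x y : List (Fin 2)}
    (hlen : x.length = y.length) (hxy : binaryValue x < binaryValue y) :
    binaryValue (A ++ x ++ B) < binaryValue (A ++ y ++ B) := by
  simp only [List.append_assoc, binaryValue_append, List.length_append, hlen]
  gcongr

section Words

variable (k : Type*) [CommRing k] (α β : k)

local notation "𝐮" => u k α β
local notation "𝐝" => d k α β

theorem u_mul_u_mul_d : 𝐮 * 𝐮 * 𝐝 = α • (𝐮 * 𝐝 * 𝐮) + β • (𝐝 * 𝐮 * 𝐮) := by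
  simpa [u, d] using RingQuot.mkAlgHom_rel k (DownUpRel.rel1 (a := α) (b := β))

theorem u_mul_d_mul_d : 𝐮 * 𝐝 * 𝐝 = α • (𝐝 * 𝐮 * 𝐝) + β • (𝐝 * 𝐝 * 𝐮) := by
  simpa [u, d] using RingQuot.mkAlgHom_rel k (DownUpRel.rel2 (a := α) (b := β))

def monomial (t : ℕ × ℕ × ℕ) : DownUp k α β := 𝐮 ^ t.1 * (𝐝 * 𝐮) ^ t.2.1 * 𝐝 ^ t.2.2

def generator (i : Fin 2) : DownUp k α β := RingQuot.mkAlgHom k (DownUpRel k α β) (ι k i)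

@[simp] theorem generator_zero : generator k α β 0 = 𝐮 := rfl

@[simp] theorem generator_one : generator k α β 1 = 𝐝 := rfl

def word (w : List (Fin 2)) : DownUp k α β := (w.map (generator k α β)).prod

@[simp] theorem word_nil : word k α β [] = 1 := rfl

@[simp] theorem word_cons (c : Fin 2) (w : List (Fin 2)) :
    word k α β (c :: w) = generator k α β c * word k α β w := List.prod_cons

@[simp] theorem word_append (v w : List (Fin 2)) :
    word k α β (v ++ w) = word k α β v * word k α β w := by
  simp [word]

theorem word_normalWord (i j l : ℕ) :
    word k α β (normalWord i j l) = monomial k α β (i, j, l) := by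
  simp [normalWord, word, monomial, List.map_flatten, List.prod_flatten, mul_assoc]

theorem span_word_eq_top : Submodule.span k (Set.range (word k α β)) = ⊤ := by
  have hgen : Algebra.adjoin k (Set.range (generator k α β)) = ⊤ := by
    rw [show generator k α β = RingQuot.mkAlgHom k _ ∘ ι k from rfl, Set.range_comp,
      ← AlgHom.map_adjoin, adjoin_range_ι, Algebra.map_top, AlgHom.range_eq_top]
    exact RingQuot.mkAlgHom_surjective k _
  have hword : Set.range (word k α β) = Submonoid.closure (Set.range (generator k α β)) := by
    rw [← FreeMonoid.mrange_lift]
    ext x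
    simp only [Set.mem_range, MonoidHom.coe_mrange, FreeMonoid.lift_apply]
    exact ⟨fun ⟨w, hw⟩ => ⟨FreeMonoid.ofList w, hw⟩, fun ⟨w, hw⟩ => ⟨w.toList, hw⟩⟩
  rw [hword, ← Algebra.adjoin_eq_span, hgen, Algebra.top_toSubmodule]

variable {k α β}

theorem word_append_append {x y z : List (Fin 2)} {a b : k}
    (h : word k α β x = a • word k α β y + b • word k α β z) (A B : List (Fin 2)) :
    word k α β (A ++ x ++ B) = a • word k α β (A ++ y ++ B) + b • word k α β (A ++ z ++ B) := by
  simp only [word_append, h, add_mul, mul_add, smul_mul_assoc, mul_smul_comm]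

end Words

section Spanning

variable {k : Type*} [Field k] {α β : k}

theorem word_one_zero_zero (hβ : β ≠ 0) :
    word k α β [1, 0, 0] = β⁻¹ • word k α β [0, 0, 1] + (-(β⁻¹ * α)) • word k α β [0, 1, 0] := by
  simp only [word_cons, word_nil, mul_one, ← mul_assoc, generator_zero, generator_one]
  rw [u_mul_u_mul_d, smul_add, smul_smul, smul_smul, inv_mul_cancel₀ hβ]
  module

theorem word_one_one_zero (hβ : β ≠ 0) :
    word k α β [1, 1, 0] = β⁻¹ • word k α β [0, 1, 1] + (-(β⁻¹ * α)) • word k α β [1, 0, 1] := by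
  simp only [word_cons, word_nil, mul_one, ← mul_assoc, generator_zero, generator_one]
  rw [u_mul_d_mul_d, smul_add, smul_smul, smul_smul, inv_mul_cancel₀ hβ]
  module

theorem word_mem_span_monomial (hβ : β ≠ 0) (w : List (Fin 2)) :
    word k α β w ∈ Submodule.span k (Set.range (monomial k α β)) := by
  induction hw : binaryValue w using Nat.strong_induction_on generalizing w with
  | _ n ih =>
  have descend {x y A B : List (Fin 2)} (hy : w = A ++ y ++ B) (hlen : x.length = y.length)
      (hxy : binaryValue x < binaryValue y) :
      word k α β (A ++ x ++ B) ∈ Submodule.span k (Set.range (monomial k α β)) :=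
    ih _ (hw ▸ hy ▸ binaryValue_append_append_lt A B hlen hxy) _ rfl
  rcases eq_normalWord_or_exists_reducible w with ⟨i, j, l, rfl⟩ | ⟨A, B, hAB | hAB⟩
  · rw [word_normalWord]
    exact Submodule.subset_span ⟨_, rfl⟩
  · rw [hAB, word_append_append (word_one_zero_zero hβ)]
    exact add_mem (Submodule.smul_mem _ _ (descend hAB rfl (by decide)))
      (Submodule.smul_mem _ _ (descend hAB rfl (by decide)))
  · rw [hAB, word_append_append (word_one_one_zero hβ)]
    exact add_mem (Submodule.smul_mem _ _ (descend hAB rfl (by decide)))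
      (Submodule.smul_mem _ _ (descend hAB rfl (by decide)))

theorem span_monomial_eq_top (hβ : β ≠ 0) :
    Submodule.span k (Set.range (monomial k α β)) = ⊤ := by
  rw [eq_top_iff, ← span_word_eq_top, Submodule.span_le]
  rintro _ ⟨w, rfl⟩
  exact word_mem_span_monomial hβ w

end Spanning

section Independence

variable {k : Type*} [Field k] (α : k) {β : k} (hβ : β ≠ 0)

open MvPolynomial Finsupp

def shiftEquiv : MvPolynomial (Fin 2) k ≃ₐ[k] MvPolynomial (Fin 2) k :=
  AlgEquiv.ofAlgHom (aeval ![X 1, β⁻¹ • (X 0 - α • X 1)]) (aeval ![α • X 0 + β • X 1, X 0])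
    (by
      ext i : 1
      fin_cases i <;> simp [smul_sub, smul_smul, mul_inv_cancel₀ hβ, mul_inv_cancel_left₀ hβ])
    (by
      ext i : 1
      fin_cases i <;> simp [smul_sub, smul_smul, inv_mul_cancel₀ hβ, mul_comm β⁻¹ α])

/-- As `shiftEquiv` sends `X₀` to `X₁` and its inverse sends `X₀` to `αX₀ + βX₁`, these satisfy
`μₙ₋₁ = αμₙ + βμₙ₊₁`, with `μ₀ = X₀` and `μ₁ = X₁`. -/
def mu (n : ℤ) : MvPolynomial (Fin 2) k := (shiftEquiv α hβ ^ n) (X 0)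

variable {α}

theorem mu_add_one (n : ℤ) : mu α hβ (n + 1) = (shiftEquiv α hβ ^ n) (X 1) := by
  rw [mu, zpow_add_one, AlgEquiv.mul_apply]
  simp [shiftEquiv]

theorem mu_sub_one (n : ℤ) : mu α hβ (n - 1) = α • mu α hβ n + β • mu α hβ (n + 1) := by
  rw [mu, zpow_sub_one, AlgEquiv.mul_apply, AlgEquiv.aut_inv, mu_add_one, mu]
  simp [shiftEquiv, AlgEquiv.ofAlgHom]

theorem mu_ne_zero (n : ℤ) : mu α hβ n ≠ 0 :=
  (map_ne_zero_iff _ (shiftEquiv α hβ ^ n).injective).mpr (X_ne_zero 0)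

theorem exists_algHom_mu_eq_zero (m : ℤ) :
    ∃ φ : MvPolynomial (Fin 2) k →ₐ[k] k, φ (mu α hβ m) = 0 ∧ φ (mu α hβ (m + 1)) = 1 :=
  ⟨(aeval ![0, 1]).comp (shiftEquiv α hβ ^ m).symm.toAlgHom, by
    rw [mu_add_one, mu]
    simp⟩

abbrev GenericModule (k : Type*) [Field k] := (ℤ × ℕ) →₀ MvPolynomial (Fin 2) k

def raiseOp : Module.End k (GenericModule k) := lmapDomain _ k fun p => (p.1 + 1, p.2)

variable (α) in
def lowerOp : Module.End k (GenericModule k) :=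
  lsum k fun p => lsingle (p.1 - 1, p.2 + 1) ∘ₗ LinearMap.mulLeft k (mu α hβ p.1)

@[simp] theorem raiseOp_single (n : ℤ) (c : ℕ) (r : MvPolynomial (Fin 2) k) :
    raiseOp (single (n, c) r) = single (n + 1, c) r := by
  simp [raiseOp]

@[simp] theorem lowerOp_single (n : ℤ) (c : ℕ) (r : MvPolynomial (Fin 2) k) :
    lowerOp α hβ (single (n, c) r) = single (n - 1, c + 1) (mu α hβ n * r) := by
  simp [lowerOp]

theorem raiseOp_mul_raiseOp_mul_lowerOp :
    raiseOp * raiseOp * lowerOp α hβ =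
      α • (raiseOp * lowerOp α hβ * raiseOp) + β • (lowerOp α hβ * raiseOp * raiseOp) := by
  refine lhom_ext fun ⟨n, c⟩ r => ?_
  have h := mu_sub_one hβ (α := α) (n + 1)
  rw [add_sub_cancel_right] at h
  simp only [Module.End.mul_apply, LinearMap.add_apply, LinearMap.smul_apply, raiseOp_single,
    lowerOp_single, smul_single, sub_add_cancel, add_sub_cancel_right]
  rw [← single_add, h, add_mul, smul_mul_assoc, smul_mul_assoc]

theorem raiseOp_mul_lowerOp_mul_lowerOp :
    raiseOp * lowerOp α hβ * lowerOp α hβ =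
      α • (lowerOp α hβ * raiseOp * lowerOp α hβ) +
        β • (lowerOp α hβ * lowerOp α hβ * raiseOp) := by
  refine lhom_ext fun ⟨n, c⟩ r => ?_
  simp only [Module.End.mul_apply, LinearMap.add_apply, LinearMap.smul_apply, raiseOp_single,
    lowerOp_single, smul_single, sub_add_cancel, add_sub_cancel_right]
  rw [← single_add, mu_sub_one hβ, add_mul, smul_mul_assoc, smul_mul_assoc,
    mul_left_comm (mu α hβ (n + 1))]

variable (α) in
def rep : DownUp k α β →ₐ[k] Module.End k (GenericModule k) :=
  RingQuot.liftAlgHom k ⟨FreeAlgebra.lift k ![raiseOp, lowerOp α hβ], fun _ _ h => by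
    cases h <;> simp [raiseOp_mul_raiseOp_mul_lowerOp, raiseOp_mul_lowerOp_mul_lowerOp]⟩

@[simp] theorem rep_u : rep α hβ (u k α β) = raiseOp := by
  simp [rep, u]

@[simp] theorem rep_d : rep α hβ (d k α β) = lowerOp α hβ := by
  simp [rep, d]

theorem raiseOp_pow_single (i : ℕ) (n : ℤ) (c : ℕ) (r : MvPolynomial (Fin 2) k) :
    (raiseOp ^ i) (single (n, c) r) = single (n + i, c) r := by
  induction i with
  | zero => simp
  | succ i ih => rw [pow_succ', Module.End.mul_apply, ih, raiseOp_single, Nat.cast_succ, add_assoc]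

theorem lowerOp_mul_raiseOp_pow_single (j : ℕ) (n : ℤ) (c : ℕ) (r : MvPolynomial (Fin 2) k) :
    ((lowerOp α hβ * raiseOp : Module.End k (GenericModule k)) ^ j) (single (n, c) r) =
      single (n, c + j) (mu α hβ (n + 1) ^ j * r) := by
  induction j with
  | zero => simp
  | succ j ih =>
    rw [pow_succ', Module.End.mul_apply, ih, Module.End.mul_apply, raiseOp_single, lowerOp_single,
      add_sub_cancel_right, pow_succ', mul_assoc, add_assoc]

theorem lowerOp_pow_single (l : ℕ) (n : ℤ) (c : ℕ) (r : MvPolynomial (Fin 2) k) :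
    (lowerOp α hβ ^ l) (single (n, c) r) =
      single (n - l, c + l) ((∏ s ∈ Finset.range l, mu α hβ (n - s)) * r) := by
  induction l with
  | zero => simp
  | succ l ih =>
    rw [pow_succ', Module.End.mul_apply, ih, lowerOp_single, Finset.prod_range_succ, Nat.cast_succ,
      sub_add_eq_sub_sub, add_assoc, mul_comm _ (mu α hβ _), mul_assoc]

variable (α) in
def monomialCoeff (m : ℤ) (j l : ℕ) : MvPolynomial (Fin 2) k :=
  mu α hβ (m - l + 1) ^ j * ∏ s ∈ Finset.range l, mu α hβ (m - s)

theorem rep_monomial_single (t : ℕ × ℕ × ℕ) :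
    rep α hβ (monomial k α β t) (single (0, 0) 1) =
      single ((t.1 : ℤ) - t.2.2, t.2.1 + t.2.2) (monomialCoeff α hβ 0 t.2.1 t.2.2) := by
  simp only [monomial, map_mul, map_pow, rep_u, rep_d, Module.End.mul_apply, lowerOp_pow_single,
    lowerOp_mul_raiseOp_pow_single, raiseOp_pow_single, monomialCoeff]
  ring_nf

theorem monomialCoeff_zero (m : ℤ) (j : ℕ) : monomialCoeff α hβ m j 0 = mu α hβ (m + 1) ^ j := by
  simp [monomialCoeff]

theorem monomialCoeff_succ (m : ℤ) (j l : ℕ) :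
    monomialCoeff α hβ m j (l + 1) = mu α hβ m * monomialCoeff α hβ (m - 1) j l := by
  simp only [monomialCoeff, Finset.prod_range_succ']
  push_cast
  ring_nf

theorem linearIndependent_monomialCoeff (N : ℕ) (m : ℤ) :
    LinearIndependent k fun l : Fin (N + 1) => monomialCoeff α hβ m (N - l) l := by
  induction N generalizing m with
  | zero => simp [monomialCoeff_zero]
  | succ N ih =>
    have hcons : (fun l : Fin (N + 2) => monomialCoeff α hβ m (N + 1 - l) l) =
        Fin.cons (mu α hβ (m + 1) ^ (N + 1))
          (LinearMap.mulLeft k (mu α hβ m) ∘ fun l : Fin (N + 1) =>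
            monomialCoeff α hβ (m - 1) (N - l) l) := by
      funext l
      refine Fin.cases ?_ (fun l => ?_) l
      · simp [monomialCoeff_zero]
      · simp [monomialCoeff_succ]
    obtain ⟨φ, hφ₀, hφ₁⟩ := exists_algHom_mu_eq_zero hβ (α := α) m
    have hspan : Submodule.span k (Set.range (LinearMap.mulLeft k (mu α hβ m) ∘
        fun l : Fin (N + 1) => monomialCoeff α hβ (m - 1) (N - l) l)) ≤
          LinearMap.ker φ.toLinearMap := by
      rw [Submodule.span_le]
      rintro _ ⟨l, rfl⟩
      simp [hφ₀]
    rw [hcons, linearIndependent_finCons]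
    refine ⟨(ih (m - 1)).map' _ (LinearMap.ker_eq_bot.mpr
      (mul_right_injective₀ (mu_ne_zero hβ m))), fun hmem => ?_⟩
    simpa [hφ₁] using hspan hmem

theorem linearIndependent_monomial (hβ : β ≠ 0) : LinearIndependent k (monomial k α β) := by
  refine LinearIndependent.of_comp
    ((LinearMap.applyₗ (single (0, 0) 1)).comp (rep α hβ).toLinearMap) ?_
  have hfib := Finsupp.linearIndependent_single (R := k)
    (fun (p : ℤ × ℕ) (l : Fin (p.2 + 1)) => monomialCoeff α hβ 0 (p.2 - l) l)
    fun p => linearIndependent_monomialCoeff hβ p.2 0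
  convert hfib.comp (fun t : ℕ × ℕ × ℕ => ⟨((t.1 : ℤ) - t.2.2, t.2.1 + t.2.2), ⟨t.2.2, by omega⟩⟩)
    ?_ using 1
  · funext t
    simp [rep_monomial_single]
  · rintro ⟨i, j, l⟩ ⟨i', j', l'⟩ h
    have hl := congrArg (fun x : Σ p : ℤ × ℕ, Fin (p.2 + 1) => (x.2 : ℕ)) h
    simp only [Sigma.mk.injEq, Prod.mk.injEq] at h hl
    simp only [Prod.mk.injEq]
    omega

end Independence

end DownUp

theorem downUp_monomial_basis_general (k : Type*) [Field k]
    (α β : k) (hβ : β ≠ 0) :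
    LinearIndependent k (fun t : ℕ × ℕ × ℕ =>
        DownUp.u k α β ^ t.1 * (DownUp.d k α β * DownUp.u k α β) ^ t.2.1 *
          DownUp.d k α β ^ t.2.2) ∧
    Submodule.span k (Set.range (fun t : ℕ × ℕ × ℕ =>
        DownUp.u k α β ^ t.1 * (DownUp.d k α β * DownUp.u k α β) ^ t.2.1 *
          DownUp.d k α β ^ t.2.2)) = ⊤ :=
  ⟨DownUp.linearIndependent_monomial hβ, DownUp.span_monomial_eq_top hβ⟩

/-- the monomials `uⁱ(du)ʲdˡ` for `(i,j,l) ∈ ℕ³` form a `k`-linear basis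
of `D(α,β)`: they are linearly independent and span `D(α,β)`. -/
theorem downUp_monomial_basis (k : Type*) [Field k] [IsAlgClosed k] [CharZero k]
    (α β : k) (hβ : β ≠ 0) :
    LinearIndependent k (fun t : ℕ × ℕ × ℕ =>
        DownUp.u k α β ^ t.1 * (DownUp.d k α β * DownUp.u k α β) ^ t.2.1 *
          DownUp.d k α β ^ t.2.2) ∧
    Submodule.span k (Set.range (fun t : ℕ × ℕ × ℕ =>
        DownUp.u k α β ^ t.1 * (DownUp.d k α β * DownUp.u k α β) ^ t.2.1 *
          DownUp.d k α β ^ t.2.2)) = ⊤ :=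
  downUp_monomial_basis_general k α β hβ

end
end

section
/- In the down-up algebra D(0,1), the unital k-subalgebra generated by the four elements (du)², (ud)², d⁴ and u² is isomorphic as a k-algebra to the commutative polynomial quotient k[x,y,z,t]/(xy − zt²); in particular this subalgebra is a commutative complete intersection. -/
open FreeAlgebra

noncomputable section

/-- The image in `D(a,b)` of a word in the free monoid on the generators `u, d`. -/
def DownUp.wordVal (k : Type*) [CommRing k] (a b : k) :
    FreeMonoid (Fin 2) →* DownUp k a b :=
  FreeMonoid.lift fun i => RingQuot.mkAlgHom k (DownUpRel k a b) (ι k i)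

/-- The degree-`n` component of the down-up algebra: the `k`-span of the images of
all words of length `n` in `u` and `d`. -/
def DownUp.degComp (k : Type*) [CommRing k] (a b : k) (n : ℕ) :
    Submodule k (DownUp k a b) :=
  Submodule.span k {z | ∃ w : FreeMonoid (Fin 2), w.length = n ∧ DownUp.wordVal k a b w = z}

/-!
Since `u²` and `d²` are central in `D(0,1)`, the four generators commute and satisfy
`(du)²·(ud)² = d⁴·(u²)²`, so `x, y, z, t ↦ (du)², (ud)², d⁴, u²` maps `k[x,y,z,t]` onto the
subalgebra with `xy − zt²` in the kernel. For the reverse inclusion, send `u ↦ [[0, w], [1, 0]]`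
and `d ↦ [[0, s], [v, 0]]` in `M₂(k[s,v,w])`: the subalgebra goes to diagonal matrices, and the
upper-left entry is the monomial map `x, y, z, t ↦ s², v²w², s²v², w`. Modulo `xy − zt²` every
polynomial is congruent to one with no monomial divisible by `xy`, and the exponent map of this
monomial map is injective on such monomials.
-/

section MonomialMap

open MvPolynomial

/-- The diagonal entries of the images of `(du)², (ud)², d⁴, u²` in `M₂(k[s,v,w])`. -/
def diagEntries (k : Type*) [CommRing k] : Fin 2 → Fin 4 → MvPolynomial (Fin 3) k :=
  ![![X 0 ^ 2, X 1 ^ 2 * X 2 ^ 2, X 0 ^ 2 * X 1 ^ 2, X 2],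
    ![X 1 ^ 2 * X 2 ^ 2, X 0 ^ 2, X 0 ^ 2 * X 1 ^ 2, X 2]]

variable {k : Type*} [CommRing k]

def diagExponent (m : Fin 4 →₀ ℕ) : Fin 3 →₀ ℕ :=
  Finsupp.single 0 (2 * m 0 + 2 * m 2) + Finsupp.single 1 (2 * m 1 + 2 * m 2) +
    Finsupp.single 2 (2 * m 1 + m 3)

lemma diagExponent_apply (m : Fin 4 →₀ ℕ) :
    diagExponent m 0 = 2 * m 0 + 2 * m 2 ∧ diagExponent m 1 = 2 * m 1 + 2 * m 2 ∧
      diagExponent m 2 = 2 * m 1 + m 3 := by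
  refine ⟨?_, ?_, ?_⟩ <;> simp [diagExponent]

lemma diagExponent_injOn : Set.InjOn diagExponent {m | m 0 = 0 ∨ m 1 = 0} := by
  rintro m (hm : m 0 = 0 ∨ m 1 = 0) n (hn : n 0 = 0 ∨ n 1 = 0) h
  obtain ⟨hm0, hm1, hm2⟩ := diagExponent_apply m
  obtain ⟨hn0, hn1, hn2⟩ := diagExponent_apply n
  rw [h] at hm0 hm1 hm2
  ext i
  fin_cases i <;> dsimp <;> omega

lemma aeval_diagEntries_zero_monomial (m : Fin 4 →₀ ℕ) (c : k) :
    aeval (diagEntries k 0) (monomial m c) = monomial (diagExponent m) c := by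
  obtain ⟨h0, h1, h2⟩ := diagExponent_apply m
  rw [aeval_monomial, monomial_eq, Finsupp.prod_fintype _ _ fun _ => pow_zero _,
    Finsupp.prod_fintype _ _ fun _ => pow_zero _, Fin.prod_univ_four, Fin.prod_univ_three,
    h0, h1, h2]
  simp only [diagEntries, Matrix.cons_val, algebraMap_eq]
  ring

lemma eq_zero_of_aeval_diagEntries_zero_eq_zero {r : MvPolynomial (Fin 4) k}
    (hr : ∀ m ∈ r.support, m 0 = 0 ∨ m 1 = 0) (h : aeval (diagEntries k 0) r = 0) :
    r = 0 := by
  by_contra hne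
  obtain ⟨m, hm⟩ := support_nonempty.2 hne
  have hcoeff : coeff (diagExponent m) (aeval (diagEntries k 0) r) = coeff m r := by
    conv_lhs => rw [r.as_sum, map_sum]
    simp only [aeval_diagEntries_zero_monomial, coeff_sum, coeff_monomial]
    rw [Finset.sum_eq_single_of_mem m hm fun n hn hnm => if_neg fun h =>
      hnm (diagExponent_injOn (hr n hn) (hr m hm) h), if_pos rfl]
  rw [h, coeff_zero] at hcoeff
  exact mem_support_iff.1 hm hcoeff.symm

/-- Trades the common power `(xy)^min(a,b)` of a monomial `x^a y^b z^c t^e` for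
`(zt²)^min(a,b)`. -/
def reduceXY (m : Fin 4 →₀ ℕ) : Fin 4 →₀ ℕ :=
  m - Finsupp.single 0 (min (m 0) (m 1)) - Finsupp.single 1 (min (m 0) (m 1)) +
    Finsupp.single 2 (min (m 0) (m 1)) + Finsupp.single 3 (2 * min (m 0) (m 1))

lemma reduceXY_reduced (m : Fin 4 →₀ ℕ) : reduceXY m 0 = 0 ∨ reduceXY m 1 = 0 := by
  simp [reduceXY]
  omega

lemma monomial_sub_monomial_reduceXY_mem (m : Fin 4 →₀ ℕ) (c : k) :
    monomial m c - monomial (reduceXY m) c ∈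
      Ideal.span {(X 0 * X 1 - X 2 * X 3 ^ 2 : MvPolynomial (Fin 4) k)} := by
  set μ := min (m 0) (m 1)
  set rest := m - Finsupp.single 0 μ - Finsupp.single 1 μ
  have hm : monomial m c = monomial rest c * (X 0 * X 1) ^ μ := by
    have hsplit : rest + (Finsupp.single 0 μ + Finsupp.single 1 μ) = m := by
      ext i
      fin_cases i <;> simp [rest, μ]
    rw [mul_pow, X_pow_eq_monomial, X_pow_eq_monomial, monomial_mul, one_mul, monomial_mul,
      mul_one, hsplit]
  have hred : monomial (reduceXY m) c = monomial rest c * (X 2 * X 3 ^ 2) ^ μ := by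
    rw [mul_pow, ← pow_mul, X_pow_eq_monomial, X_pow_eq_monomial, monomial_mul, one_mul,
      monomial_mul, mul_one, reduceXY, add_assoc]
  rw [hm, hred, ← mul_sub]
  exact Ideal.mul_mem_left _ _ (Ideal.mem_span_singleton.2 (sub_dvd_pow_sub_pow _ _ μ))

lemma exists_sub_mem_span_reduced (f : MvPolynomial (Fin 4) k) :
    ∃ r, f - r ∈ Ideal.span {(X 0 * X 1 - X 2 * X 3 ^ 2 : MvPolynomial (Fin 4) k)} ∧
      ∀ m ∈ r.support, m 0 = 0 ∨ m 1 = 0 := by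
  refine ⟨∑ m ∈ f.support, monomial (reduceXY m) (coeff m f), ?_, fun m hm => ?_⟩
  · rw [show f - _ = ∑ m ∈ f.support,
        (monomial m (coeff m f) - monomial (reduceXY m) (coeff m f)) by
      rw [Finset.sum_sub_distrib, ← as_sum]]
    exact Ideal.sum_mem _ fun m _ => monomial_sub_monomial_reduceXY_mem m _
  · obtain ⟨n, -, hn⟩ := Finset.mem_biUnion.1 (support_sum hm)
    rw [(Finset.mem_singleton.1 (support_monomial_subset hn))]
    exact reduceXY_reduced n

lemma mem_span_of_aeval_diagEntries_zero_eq_zero {f : MvPolynomial (Fin 4) k}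
    (h : aeval (diagEntries k 0) f = 0) :
    f ∈ Ideal.span {(X 0 * X 1 - X 2 * X 3 ^ 2 : MvPolynomial (Fin 4) k)} := by
  obtain ⟨r, hfr, hr⟩ := exists_sub_mem_span_reduced f
  have hrel : aeval (diagEntries k 0) (X 0 * X 1 - X 2 * X 3 ^ 2 : MvPolynomial (Fin 4) k) = 0 := by
    simp [diagEntries]
    ring
  have hfr0 : aeval (diagEntries k 0) (f - r) = 0 := by
    obtain ⟨q, hq⟩ := Ideal.mem_span_singleton.1 hfr
    rw [hq, map_mul, hrel, zero_mul]
  have hr0 : r = 0 := eq_zero_of_aeval_diagEntries_zero_eq_zero hr (by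
    rwa [map_sub, h, zero_sub, neg_eq_zero] at hfr0)
  rwa [hr0, sub_zero] at hfr

end MonomialMap

namespace DownUp

section Generic

variable {k : Type*} [CommRing k] {a b : k}

lemma u_mul_u_mul_d_s17 :
    u k a b * u k a b * d k a b =
      a • (u k a b * d k a b * u k a b) + b • (d k a b * u k a b * u k a b) := by
  have := RingQuot.mkAlgHom_rel k (DownUpRel.rel1 (k := k) (a := a) (b := b))
  simp only [map_mul, map_add, map_smul] at this
  exact this

lemma u_mul_d_mul_d_s17 :
    u k a b * d k a b * d k a b =
      a • (d k a b * u k a b * d k a b) + b • (d k a b * d k a b * u k a b) := by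
  have := RingQuot.mkAlgHom_rel k (DownUpRel.rel2 (k := k) (a := a) (b := b))
  simp only [map_mul, map_add, map_smul] at this
  exact this

variable {A : Type*} [Semiring A] [Algebra k A] (x y : A)
  (h₁ : x * x * y = a • (x * y * x) + b • (y * x * x))
  (h₂ : x * y * y = a • (y * x * y) + b • (y * y * x))

def lift : DownUp k a b →ₐ[k] A :=
  RingQuot.liftAlgHom k ⟨FreeAlgebra.lift k ![x, y], fun _ _ r => by cases r <;> simpa⟩

lemma lift_u : lift x y h₁ h₂ (u k a b) = x := by
  simp [lift, DownUp.u]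

lemma lift_d : lift x y h₁ h₂ (d k a b) = y := by
  simp [lift, DownUp.d]

lemma adjoin_u_d : Algebra.adjoin k {u k a b, d k a b} = ⊤ := by
  have hgens : ({u k a b, d k a b} : Set (DownUp k a b)) =
      RingQuot.mkAlgHom k (DownUpRel k a b) '' Set.range (FreeAlgebra.ι k) := by
    ext z
    simp [← Set.range_comp, Fin.exists_fin_two, DownUp.u, DownUp.d, eq_comm]
  rw [hgens, Algebra.adjoin_image, FreeAlgebra.adjoin_range_ι, Algebra.map_top,
    AlgHom.range_eq_top]
  exact RingQuot.mkAlgHom_surjective k _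

lemma commute_of_commute_u_d {z : DownUp k a b} (hu : Commute z (u k a b))
    (hd : Commute z (d k a b)) (x : DownUp k a b) : Commute z x :=
  Algebra.commute_of_mem_adjoin_of_forall_mem_commute (by rw [adjoin_u_d]; exact Algebra.mem_top)
    (by simp [hu, hd])

end Generic

section ZeroOne

variable (k : Type*) [CommRing k]

lemma commute_u_sq (x : DownUp k 0 1) : Commute (u k 0 1 ^ 2) x := by
  refine commute_of_commute_u_d ((Commute.refl _).pow_left 2) ?_ x
  rw [Commute, SemiconjBy, sq, ← mul_assoc]
  simpa using u_mul_u_mul_d_s17 (k := k) (a := 0) (b := 1)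

lemma commute_d_sq (x : DownUp k 0 1) : Commute (d k 0 1 ^ 2) x := by
  refine commute_of_commute_u_d ?_ ((Commute.refl _).pow_left 2) x
  rw [Commute, SemiconjBy, sq, ← mul_assoc]
  simpa using (u_mul_d_mul_d_s17 (k := k) (a := 0) (b := 1)).symm

lemma commute_d_pow_four (x : DownUp k 0 1) : Commute (d k 0 1 ^ 4) x := by
  simpa [← pow_mul] using (commute_d_sq k x).pow_left 2

lemma d_mul_u_mul_u_mul_d :
    d k 0 1 * u k 0 1 * (u k 0 1 * d k 0 1) = u k 0 1 ^ 2 * d k 0 1 ^ 2 := by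
  rw [mul_assoc, ← mul_assoc (u k 0 1), ← sq, (commute_u_sq k _).eq, ← mul_assoc, ← sq,
    (commute_u_sq k _).eq]

lemma u_mul_d_mul_d_mul_u :
    u k 0 1 * d k 0 1 * (d k 0 1 * u k 0 1) = u k 0 1 ^ 2 * d k 0 1 ^ 2 := by
  rw [mul_assoc, ← mul_assoc (d k 0 1), ← sq, (commute_d_sq k _).eq, ← mul_assoc, ← sq]

lemma commute_d_mul_u_sq_u_mul_d_sq :
    Commute ((d k 0 1 * u k 0 1) ^ 2) ((u k 0 1 * d k 0 1) ^ 2) :=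
  Commute.pow_pow ((d_mul_u_mul_u_mul_d k).trans (u_mul_d_mul_d_mul_u k).symm) 2 2

lemma d_mul_u_sq_mul_u_mul_d_sq :
    (d k 0 1 * u k 0 1) ^ 2 * (u k 0 1 * d k 0 1) ^ 2 = d k 0 1 ^ 4 * (u k 0 1 ^ 2) ^ 2 := by
  have hcentral (x : DownUp k 0 1) : Commute (u k 0 1 ^ 2 * d k 0 1 ^ 2) x :=
    (commute_u_sq k x).mul_left (commute_d_sq k x)
  calc (d k 0 1 * u k 0 1) ^ 2 * (u k 0 1 * d k 0 1) ^ 2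
      = d k 0 1 * u k 0 1 * (d k 0 1 * u k 0 1 * (u k 0 1 * d k 0 1)) * (u k 0 1 * d k 0 1) := by
        simp only [sq, mul_assoc]
    _ = u k 0 1 ^ 2 * d k 0 1 ^ 2 * (u k 0 1 ^ 2 * d k 0 1 ^ 2) := by
        rw [d_mul_u_mul_u_mul_d, ← (hcentral _).eq, mul_assoc, d_mul_u_mul_u_mul_d]
    _ = d k 0 1 ^ 4 * (u k 0 1 ^ 2) ^ 2 := by
        rw [(commute_d_pow_four k _).eq, mul_assoc, ← mul_assoc (d k 0 1 ^ 2),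
          ← (commute_u_sq k (d k 0 1 ^ 2)).eq]
        noncomm_ring

end ZeroOne

section Subalgebra

variable (k : Type*) [CommRing k]

abbrev subalgGens : Set (DownUp k 0 1) :=
  {(d k 0 1 * u k 0 1) ^ 2, (u k 0 1 * d k 0 1) ^ 2, d k 0 1 ^ 4, u k 0 1 ^ 2}

instance : IsMulCommutative (Algebra.adjoin k (subalgGens k)) :=
  Algebra.isMulCommutative_adjoin k <| by
    rintro x (rfl | rfl | rfl | rfl) y (rfl | rfl | rfl | rfl) <;>
      first
        | rfl
        | exact (commute_d_mul_u_sq_u_mul_d_sq k).eq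
        | exact (commute_d_mul_u_sq_u_mul_d_sq k).eq.symm
        | exact (commute_d_pow_four k _).eq
        | exact (commute_d_pow_four k _).eq.symm
        | exact (commute_u_sq k _).eq
        | exact (commute_u_sq k _).eq.symm

def subalgGen : Fin 4 → DownUp k 0 1 :=
  ![(d k 0 1 * u k 0 1) ^ 2, (u k 0 1 * d k 0 1) ^ 2, d k 0 1 ^ 4, u k 0 1 ^ 2]

lemma range_subalgGen : Set.range (subalgGen k) = subalgGens k := by
  ext x
  simp only [subalgGen, Matrix.range_cons, Matrix.range_empty, Set.union_empty,
    Set.singleton_union]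

open scoped IsMulCommutative

def aevalSubalgGen : MvPolynomial (Fin 4) k →ₐ[k] Algebra.adjoin k (subalgGens k) :=
  MvPolynomial.aeval fun i =>
    ⟨subalgGen k i, Algebra.subset_adjoin (range_subalgGen k ▸ ⟨i, rfl⟩)⟩

lemma aevalSubalgGen_surjective : Function.Surjective (aevalSubalgGen k) := by
  rw [← AlgHom.range_eq_top, aevalSubalgGen, MvPolynomial.aeval_range,
    ← Algebra.adjoin_adjoin_coe_preimage]
  congr 1
  ext x
  simp [Subtype.ext_iff, ← range_subalgGen, eq_comm]

open MvPolynomial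

def matrixRep : DownUp k 0 1 →ₐ[k] Matrix (Fin 2) (Fin 2) (MvPolynomial (Fin 3) k) :=
  lift !![0, X 2; 1, 0] !![0, X 0; X 1, 0] (by simp [mul_comm])
    (by simp [mul_comm, mul_assoc])

lemma matrixRep_aevalSubalgGen (p : MvPolynomial (Fin 4) k) :
    matrixRep k (aevalSubalgGen k p) = Matrix.diagonal fun i => aeval (diagEntries k i) p := by
  suffices h : (matrixRep k).comp ((Algebra.adjoin k (subalgGens k)).val.comp (aevalSubalgGen k)) =
      (Matrix.diagonalAlgHom k).comp (AlgHom.pi fun i => aeval (diagEntries k i)) from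
    congrArg (· p) h
  refine algHom_ext fun i => ?_
  fin_cases i <;>
    simp [aevalSubalgGen, subalgGen, matrixRep, lift_u, lift_d, diagEntries, pow_succ,
      Matrix.diagonal_fin_two, mul_comm, mul_left_comm, mul_assoc]

lemma ker_aevalSubalgGen :
    RingHom.ker (aevalSubalgGen k) =
      Ideal.span {(X 0 * X 1 - X 2 * X 3 ^ 2 : MvPolynomial (Fin 4) k)} := by
  refine le_antisymm (fun p hp => mem_span_of_aeval_diagEntries_zero_eq_zero ?_) ?_
  · simpa [RingHom.mem_ker.1 hp, eq_comm] using
      congrFun (congrFun (matrixRep_aevalSubalgGen k p) 0) 0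
  · rw [Ideal.span_le, Set.singleton_subset_iff, SetLike.mem_coe, RingHom.mem_ker, map_sub,
      sub_eq_zero]
    ext
    simpa [aevalSubalgGen, subalgGen] using d_mul_u_sq_mul_u_mul_d_sq k

end Subalgebra

end DownUp

open MvPolynomial in
theorem adjoin_iso_complete_intersection_general
    (k : Type*) [Field k] :
    Nonempty
      ((Algebra.adjoin k
          ({(DownUp.d k 0 1 * DownUp.u k 0 1) ^ 2, (DownUp.u k 0 1 * DownUp.d k 0 1) ^ 2,
            DownUp.d k 0 1 ^ 4, DownUp.u k 0 1 ^ 2} : Set (DownUp k 0 1))) ≃ₐ[k]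
        (MvPolynomial (Fin 4) k ⧸
          Ideal.span ({X 0 * X 1 - X 2 * X 3 ^ 2} : Set (MvPolynomial (Fin 4) k)))) :=
  ⟨(Ideal.quotientKerAlgEquivOfSurjective (DownUp.aevalSubalgGen_surjective k)).symm.trans
    (Ideal.quotientEquivAlgOfEq k (DownUp.ker_aevalSubalgGen k))⟩

open MvPolynomial in
/-- in `D(0,1)`, the unital `k`-subalgebra generated by
`(du)², (ud)², d⁴, u²` is isomorphic as a `k`-algebra to the commutative complete
intersection `k[x,y,z,t]/(xy − zt²)`. -/
theorem adjoin_iso_complete_intersection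
    (k : Type*) [Field k] [IsAlgClosed k] [CharZero k] :
    Nonempty
      ((Algebra.adjoin k
          ({(DownUp.d k 0 1 * DownUp.u k 0 1) ^ 2, (DownUp.u k 0 1 * DownUp.d k 0 1) ^ 2,
            DownUp.d k 0 1 ^ 4, DownUp.u k 0 1 ^ 2} : Set (DownUp k 0 1))) ≃ₐ[k]
        (MvPolynomial (Fin 4) k ⧸
          Ideal.span ({X 0 * X 1 - X 2 * X 3 ^ 2} : Set (MvPolynomial (Fin 4) k)))) :=
  adjoin_iso_complete_intersection_general k
end
end
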